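/- Let f(y) = 4y(1 − y) be the logistic map at fully developed chaos. Then for y ∈ (0, 1): (a) if 0 < y < 1/4 then y < f(y) < f(f(y)); (b) if 1/4 < y < (5−√5)/8 then y < f(f(y)) < f(y); (c) if (5−√5)/8 < y < 3/4 then f(f(y)) < y < f(y); (d) if 3/4 < y < (5+√5)/8 then f(y) < y < f(f(y)); (e) if (5+√5)/8 < y < 1 then f(y) < f(f(y)) < y; and (f) there is no y ∈ (0, 1) with f(f(y)) < f(y) < y, i.e., the ordinal pattern (2,1,0) is forbidden for the logistic map with embedding dimension 3. -/

import Mathlib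

/-!
Writing `f` for the logistic map, the three differences of the triple `(y, f y, f (f y))`
factor completely:
`f y - y = y (3 - 4y)`, `f (f y) - f y = f y (4y - 1)(4y - 3)` and
`f (f y) - y = (f y - y)(16y² - 20y + 5)`, where the roots `(5 ± √5)/8` of the quadratic
form the period-two orbit of `f`. The ordinal pattern of `y` is therefore read off from the
position of `y` relative to `1/4 < (5 - √5)/8 < 3/4 < (5 + √5)/8 < 1`. The pattern `(2,1,0)`
would need `f y < y`, i.e. `y > 3/4`, where `f (f y) > f y`.
-/

/-- The logistic map at fully developed chaos. -/
noncomputable def logisticMap (y : ℝ) : ℝ := 4 * y * (1 - y)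

open Real

section

variable {y : ℝ}

theorem logisticMap_pos (h0 : 0 < y) (h1 : y < 1) : 0 < logisticMap y := by
  have := sub_pos.2 h1
  unfold logisticMap
  positivity

theorem logisticMap_sub_self (y : ℝ) : logisticMap y - y = y * (3 - 4 * y) := by
  unfold logisticMap
  ring

theorem logisticMap_logisticMap_sub_logisticMap (y : ℝ) :
    logisticMap (logisticMap y) - logisticMap y =
      logisticMap y * ((4 * y - 1) * (4 * y - 3)) := by
  rw [logisticMap_sub_self]
  unfold logisticMap
  ring

theorem logisticMap_logisticMap_sub_self (y : ℝ) :
    logisticMap (logisticMap y) - y = (logisticMap y - y) * (16 * y ^ 2 - 20 * y + 5) := by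
  unfold logisticMap
  ring

theorem lt_logisticMap_iff (h0 : 0 < y) : y < logisticMap y ↔ y < 3 / 4 := by
  rw [← sub_pos, logisticMap_sub_self, mul_pos_iff_of_pos_left h0]
  constructor <;> intro h <;> linarith

theorem logisticMap_lt_iff (h0 : 0 < y) : logisticMap y < y ↔ 3 / 4 < y := by
  rw [← sub_neg, logisticMap_sub_self]
  constructor <;> intro h <;> nlinarith

theorem logisticMap_lt_logisticMap_logisticMap (h0 : 0 < y) (h1 : y < 1)
    (h : y < 1 / 4 ∨ 3 / 4 < y) : logisticMap y < logisticMap (logisticMap y) := by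
  rw [← sub_pos, logisticMap_logisticMap_sub_logisticMap]
  refine mul_pos (logisticMap_pos h0 h1) ?_
  rcases h with h | h
  · exact mul_pos_of_neg_of_neg (by linarith) (by linarith)
  · exact mul_pos (by linarith) (by linarith)

theorem logisticMap_logisticMap_lt_logisticMap (h0 : 1 / 4 < y) (h1 : y < 3 / 4) :
    logisticMap (logisticMap y) < logisticMap y := by
  rw [← sub_neg, logisticMap_logisticMap_sub_logisticMap]
  exact mul_neg_of_pos_of_neg (logisticMap_pos (by linarith) (by linarith))
    (mul_neg_of_pos_of_neg (by linarith) (by linarith))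

theorem sixteen_mul_sq_sub_twenty_mul_add_five_eq (y : ℝ) :
    16 * y ^ 2 - 20 * y + 5 = 16 * (y - (5 - √5) / 8) * (y - (5 + √5) / 8) := by
  ring_nf
  rw [sq_sqrt (by norm_num)]
  ring

theorem one_lt_sqrt_five : 1 < √5 :=
  lt_sqrt_of_sq_lt (by norm_num)

theorem sqrt_five_lt_three : √5 < 3 :=
  (sqrt_lt' (by norm_num)).2 (by norm_num)

theorem sixteen_mul_sq_sub_twenty_mul_add_five_pos_of_lt (h : y < (5 - √5) / 8) :
    0 < 16 * y ^ 2 - 20 * y + 5 := by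
  rw [sixteen_mul_sq_sub_twenty_mul_add_five_eq]
  exact mul_pos_of_neg_of_neg (mul_neg_of_pos_of_neg (by norm_num) (by linarith))
    (by linarith [sqrt_nonneg 5])

theorem sixteen_mul_sq_sub_twenty_mul_add_five_pos_of_gt (h : (5 + √5) / 8 < y) :
    0 < 16 * y ^ 2 - 20 * y + 5 := by
  rw [sixteen_mul_sq_sub_twenty_mul_add_five_eq]
  exact mul_pos (mul_pos (by norm_num) (by linarith [sqrt_nonneg 5])) (by linarith)

theorem sixteen_mul_sq_sub_twenty_mul_add_five_neg (h0 : (5 - √5) / 8 < y)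
    (h1 : y < (5 + √5) / 8) : 16 * y ^ 2 - 20 * y + 5 < 0 := by
  rw [sixteen_mul_sq_sub_twenty_mul_add_five_eq]
  exact mul_neg_of_pos_of_neg (mul_pos (by norm_num) (by linarith)) (by linarith)

end

/-- The ordinal patterns of the triple `(y, f(y), f(f(y)))` for the logistic map
`f(y) = 4y(1-y)` on the five subintervals of `(0,1)`, and the fact that the
pattern `(2,1,0)` (i.e. `f(f(y)) < f(y) < y`) is forbidden. -/
theorem logistic_ordinal_patterns :
    (∀ y : ℝ, 0 < y → y < 1 / 4 →
      y < logisticMap y ∧ logisticMap y < logisticMap (logisticMap y)) ∧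
    (∀ y : ℝ, 1 / 4 < y → y < (5 - Real.sqrt 5) / 8 →
      y < logisticMap (logisticMap y) ∧ logisticMap (logisticMap y) < logisticMap y) ∧
    (∀ y : ℝ, (5 - Real.sqrt 5) / 8 < y → y < 3 / 4 →
      logisticMap (logisticMap y) < y ∧ y < logisticMap y) ∧
    (∀ y : ℝ, 3 / 4 < y → y < (5 + Real.sqrt 5) / 8 →
      logisticMap y < y ∧ y < logisticMap (logisticMap y)) ∧
    (∀ y : ℝ, (5 + Real.sqrt 5) / 8 < y → y < 1 →
      logisticMap y < logisticMap (logisticMap y) ∧ logisticMap (logisticMap y) < y) ∧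
    ¬ ∃ y : ℝ, 0 < y ∧ y < 1 ∧
      logisticMap (logisticMap y) < logisticMap y ∧ logisticMap y < y := by
  have hs1 := one_lt_sqrt_five
  have hs3 := sqrt_five_lt_three
  refine ⟨fun y hl hr => ?_, fun y hl hr => ?_, fun y hl hr => ?_, fun y hl hr => ?_,
    fun y hl hr => ?_, ?_⟩
  · exact ⟨(lt_logisticMap_iff hl).2 (by linarith),
      logisticMap_lt_logisticMap_logisticMap hl (by linarith) (.inl hr)⟩
  · refine ⟨sub_pos.1 ?_, logisticMap_logisticMap_lt_logisticMap hl (by linarith)⟩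
    rw [logisticMap_logisticMap_sub_self]
    exact mul_pos (sub_pos.2 ((lt_logisticMap_iff (by linarith)).2 (by linarith)))
      (sixteen_mul_sq_sub_twenty_mul_add_five_pos_of_lt hr)
  · have hy : y < logisticMap y := (lt_logisticMap_iff (by linarith)).2 hr
    refine ⟨sub_neg.1 ?_, hy⟩
    rw [logisticMap_logisticMap_sub_self]
    exact mul_neg_of_pos_of_neg (sub_pos.2 hy)
      (sixteen_mul_sq_sub_twenty_mul_add_five_neg hl (by linarith))
  · have hy : logisticMap y < y := (logisticMap_lt_iff (by linarith)).2 hl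
    refine ⟨hy, sub_pos.1 ?_⟩
    rw [logisticMap_logisticMap_sub_self]
    exact mul_pos_of_neg_of_neg (sub_neg.2 hy)
      (sixteen_mul_sq_sub_twenty_mul_add_five_neg (by linarith) hr)
  · refine ⟨logisticMap_lt_logisticMap_logisticMap (by linarith) hr (.inr (by linarith)),
      sub_neg.1 ?_⟩
    rw [logisticMap_logisticMap_sub_self]
    exact mul_neg_of_neg_of_pos (sub_neg.2 ((logisticMap_lt_iff (by linarith)).2 (by linarith)))
      (sixteen_mul_sq_sub_twenty_mul_add_five_pos_of_gt hl)
  · rintro ⟨y, h0, h1, hffy, hfy⟩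
    exact hffy.not_gt (logisticMap_lt_logisticMap_logisticMap h0 h1
      (.inr ((logisticMap_lt_iff h0).1 hfy)))
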